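/- Let G be a finite non-abelian group with nontrivial center (|Z(G)| ≥ 2) such that |C_G(x)| < 3 + |Z(G)| for every noncentral element x (i.e., G is strong 2-star free). Then G is isomorphic to D_8 or to Q_8. -/

import Mathlib

/-! For noncentral `x` the center is a proper subgroup of `C_G(x)`, so
`2 |Z(G)| ≤ |C_G(x)| < 3 + |Z(G)|`, which forces `|Z(G)| = 2` and `|C_G(x)| = 4`. Then `Z(G)` has
index 2 in `C_G(g)` for every noncentral `g`, so all squares, hence all commutators, are central; as
`g C_G(u) ↦ [g, u]` embeds `G / C_G(u)` into `Z(G)`, `|G| = 8`. An element `y` with `y² ≠ 1` has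
order 4 and `C_G(y) = ⟨y⟩`; for `x ∉ ⟨y⟩` the commutator `[x, y]` is the nontrivial central element
`y²`, so `x y x⁻¹ = y⁻¹`, and `x² ∈ Z(G) = {1, y²}` decides between `D₈` and `Q₈`. -/

open Subgroup
open scoped commutatorElement

section PowVal

variable {G : Type*} [Group G] {m : ℕ} {x y : G}

theorem pow_val_add [NeZero m] (hy : y ^ m = 1) (i j : ZMod m) :
    y ^ (i + j).val = y ^ i.val * y ^ j.val := by
  rw [ZMod.val_add, ← pow_eq_pow_mod _ hy, pow_add]

theorem pow_val_neg [NeZero m] (hy : y ^ m = 1) (i : ZMod m) :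
    y ^ (-i).val = (y ^ i.val)⁻¹ :=
  eq_inv_of_mul_eq_one_left (by rw [← pow_val_add hy, neg_add_cancel, ZMod.val_zero, pow_zero])

theorem pow_val_mul_eq_mul_pow_val_neg [NeZero m] (hy : y ^ m = 1) (hxy : x * y * x⁻¹ = y⁻¹)
    (i : ZMod m) : y ^ i.val * x = x * y ^ (-i).val := by
  have hyx : x * y⁻¹ * x⁻¹ = y := by
    calc x * y⁻¹ * x⁻¹ = (x * y * x⁻¹)⁻¹ := by group
      _ = y := by rw [hxy, inv_inv]
  calc y ^ i.val * x = (x * y⁻¹ * x⁻¹) ^ i.val * x := by rw [hyx]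
    _ = x * y ^ (-i).val := by rw [conj_pow, pow_val_neg hy, inv_pow]; group

theorem pow_val_mul_mul_pow_val [NeZero m] (hy : y ^ m = 1) (hxy : x * y * x⁻¹ = y⁻¹)
    (i j : ZMod m) : y ^ i.val * (x * y ^ j.val) = x * y ^ (j - i).val := by
  rw [← mul_assoc, pow_val_mul_eq_mul_pow_val_neg hy hxy, mul_assoc, ← pow_val_add hy,
    neg_add_eq_sub]

theorem mul_pow_val_mul_mul_pow_val [NeZero m] (hy : y ^ m = 1) (hxy : x * y * x⁻¹ = y⁻¹)
    (i j : ZMod m) : x * y ^ i.val * (x * y ^ j.val) = x ^ 2 * y ^ (j - i).val := by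
  rw [mul_assoc x, pow_val_mul_mul_pow_val hy hxy, ← mul_assoc, sq]

theorem pow_val_eq_one_iff [NeZero m] (hy : orderOf y = m) {i : ZMod m} :
    y ^ i.val = 1 ↔ i = 0 := by
  rw [← orderOf_dvd_iff_pow_eq_one, hy, ← ZMod.natCast_eq_zero_iff, ZMod.natCast_zmod_val]

theorem mul_pow_ne_one (hx : x ∉ zpowers y) (k : ℕ) : x * y ^ k ≠ 1 := fun h =>
  hx (eq_inv_of_mul_eq_one_left h ▸ inv_mem (pow_mem (mem_zpowers y) k))

end PowVal

namespace DihedralGroup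

variable {G : Type*} [Group G] {n : ℕ} [NeZero n] {x y : G}

def lift (hy : y ^ n = 1) (hx : x ^ 2 = 1) (hxy : x * y * x⁻¹ = y⁻¹) : DihedralGroup n →* G :=
  MonoidHom.mk' (fun | r i => y ^ i.val | sr i => x * y ^ i.val) <| by
    rintro (i | i) (j | j) <;> simp only [r_mul_r, r_mul_sr, sr_mul_r, sr_mul_sr]
    · exact pow_val_add hy i j
    · exact (pow_val_mul_mul_pow_val hy hxy i j).symm
    · rw [mul_assoc, pow_val_add hy]
    · rw [mul_pow_val_mul_mul_pow_val hy hxy, hx, one_mul]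

theorem lift_injective {hy : y ^ n = 1} {hx : x ^ 2 = 1} {hxy : x * y * x⁻¹ = y⁻¹}
    (hord : orderOf y = n) (hx_mem : x ∉ zpowers y) : Function.Injective (lift hy hx hxy) := by
  rw [injective_iff_map_eq_one]
  rintro (i | i) h
  · rw [one_def, (pow_val_eq_one_iff hord).mp h]
  · exact absurd h (mul_pow_ne_one hx_mem i.val)

theorem nonempty_mulEquiv [Finite G] (hG : Nat.card G = 2 * n) (hy : orderOf y = n)
    (hx : x ^ 2 = 1) (hxy : x * y * x⁻¹ = y⁻¹) (hx_mem : x ∉ zpowers y) :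
    Nonempty (G ≃* DihedralGroup n) :=
  have hyn : y ^ n = 1 := hy ▸ pow_orderOf_eq_one y
  ⟨(MulEquiv.ofBijective (lift hyn hx hxy)
    ((lift_injective hy hx_mem).bijective_of_nat_card_le (by rw [nat_card, hG]))).symm⟩

end DihedralGroup

namespace QuaternionGroup

variable {G : Type*} [Group G] {n : ℕ} [NeZero n] {x y : G}

def lift (hy : y ^ (2 * n) = 1) (hx : x ^ 2 = y ^ n) (hxy : x * y * x⁻¹ = y⁻¹) :
    QuaternionGroup n →* G :=
  MonoidHom.mk' (fun | a i => y ^ i.val | xa i => x * y ^ i.val) <| by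
    rintro (i | i) (j | j) <;> simp only [a_mul_a, a_mul_xa, xa_mul_a, xa_mul_xa]
    · exact pow_val_add hy i j
    · exact (pow_val_mul_mul_pow_val hy hxy i j).symm
    · rw [mul_assoc, pow_val_add hy]
    · rw [mul_pow_val_mul_mul_pow_val hy hxy, hx, add_sub_assoc, pow_val_add hy,
        ZMod.val_natCast, ← pow_eq_pow_mod _ hy]

theorem lift_injective {hy : y ^ (2 * n) = 1} {hx : x ^ 2 = y ^ n} {hxy : x * y * x⁻¹ = y⁻¹}
    (hord : orderOf y = 2 * n) (hx_mem : x ∉ zpowers y) : Function.Injective (lift hy hx hxy) := by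
  rw [injective_iff_map_eq_one]
  rintro (i | i) h
  · rw [one_def, (pow_val_eq_one_iff hord).mp h]
  · exact absurd h (mul_pow_ne_one hx_mem i.val)

theorem nonempty_mulEquiv [Finite G] (hG : Nat.card G = 4 * n) (hy : orderOf y = 2 * n)
    (hx : x ^ 2 = y ^ n) (hxy : x * y * x⁻¹ = y⁻¹) (hx_mem : x ∉ zpowers y) :
    Nonempty (G ≃* QuaternionGroup n) :=
  have hyn : y ^ (2 * n) = 1 := hy ▸ pow_orderOf_eq_one y
  ⟨(MulEquiv.ofBijective (lift hyn hx hxy) ((lift_injective hy hx_mem).bijective_of_nat_card_le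
    (by rw [Nat.card_eq_fintype_card (α := QuaternionGroup n), card, hG]))).symm⟩

end QuaternionGroup

namespace Subgroup

variable {G : Type*} [Group G]

theorem two_mul_card_le_card_of_lt {H K : Subgroup G} [Finite K] (h : H < K) :
    2 * Nat.card H ≤ Nat.card K := by
  obtain ⟨k, hk⟩ := card_dvd_of_le h.le
  rcases k with _ | _ | k
  · exact absurd hk (by rw [mul_zero]; exact Nat.card_pos.ne')
  · exact absurd (eq_of_le_of_card_ge h.le (by simp [hk])) h.ne
  · rw [hk]
    nlinarith

theorem sq_mem_of_card_eq_two_mul {H K : Subgroup G} [H.Normal] [Finite K] (hHK : H ≤ K)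
    (hcard : Nat.card K = 2 * Nat.card H) {g : G} (hg : g ∈ K) : g ^ 2 ∈ H := by
  have hidx : H.relIndex K = 2 := by
    have hmul := (H.subgroupOf K).index_mul_card
    have hpos : 0 < Nat.card (H.subgroupOf K) := Nat.card_pos
    rw [Nat.card_congr (subgroupOfEquivOfLe hHK).toEquiv] at hmul hpos
    exact Nat.eq_of_mul_eq_mul_right hpos (hmul.trans hcard)
  simpa [hidx] using H.pow_relIndex_mem hg

theorem eq_one_or_eq_of_card_eq_two {H : Subgroup G} (hH : Nat.card H = 2) {a b : G}
    (hb : b ∈ H) (hb1 : b ≠ 1) (ha : a ∈ H) : a = 1 ∨ a = b := by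
  obtain ⟨w, -, hw⟩ := (Nat.card_eq_two_iff' (1 : H)).mp hH
  refine or_iff_not_imp_left.mpr fun ha1 => ?_
  exact congrArg Subtype.val ((hw ⟨a, ha⟩ (mt (congrArg Subtype.val) ha1)).trans
    (hw ⟨b, hb⟩ (mt (congrArg Subtype.val) hb1)).symm)

theorem two_mul_card_center_le_card_centralizer [Finite G] {x : G} (hx : x ∉ center G) :
    2 * Nat.card (center G) ≤ Nat.card (centralizer {x}) :=
  two_mul_card_le_card_of_lt (SetLike.lt_iff_le_and_exists.mpr
    ⟨center_le_centralizer _, x, mem_centralizer_singleton_iff.mpr rfl, hx⟩)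

theorem commutatorElement_mem_center_of_forall_sq_mem_center
    (hsq : ∀ g : G, g ^ 2 ∈ center G) (a b : G) : ⁅a, b⁆ ∈ center G := by
  have hab : b * (a ^ 2)⁻¹ = (a ^ 2)⁻¹ * b := mem_center_iff.mp (inv_mem (hsq a)) b
  have hcomm : ⁅a, b⁆ = (a * b) ^ 2 * (a ^ 2)⁻¹ * (b ^ 2)⁻¹ :=
    calc ⁅a, b⁆ = a * b * a * ((a ^ 2)⁻¹ * b) * (b ^ 2)⁻¹ := by rw [commutatorElement_def]; group
      _ = (a * b) ^ 2 * (a ^ 2)⁻¹ * (b ^ 2)⁻¹ := by rw [← hab, sq (a * b)]; group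
  rw [hcomm]
  exact mul_mem (mul_mem (hsq _) (inv_mem (hsq a))) (inv_mem (hsq b))

theorem card_le_card_center_mul_card_centralizer [Finite (center G)]
    (hcomm : ∀ a b : G, ⁅a, b⁆ ∈ center G) (g : G) :
    Nat.card G ≤ Nat.card (center G) * Nat.card (centralizer {g}) := by
  have hsub : commutatorSet G ⊆ center G := by
    rintro _ ⟨a, b, rfl⟩
    exact hcomm a b
  rw [← (centralizer {g}).index_mul_card]
  exact Nat.mul_le_mul_right _ (Nat.card_le_card_of_injective (Set.inclusion hsub ∘
    quotientCentralizerEmbedding g) ((Set.inclusion_injective hsub).comp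
      (quotientCentralizerEmbedding g).injective))

theorem orderOf_eq_four_of_sq_mem {H : Subgroup G} (hH : Nat.card H = 2) {y : G}
    (hy : y ^ 2 ∈ H) (hy1 : y ^ 2 ≠ 1) : orderOf y = 4 := by
  have hy4 : (y ^ 2) ^ 2 = 1 := orderOf_dvd_iff_pow_eq_one.mp (hH ▸ H.orderOf_dvd_natCard hy :)
  exact orderOf_eq_prime_pow (p := 2) (n := 1) hy1 (by rwa [← pow_mul] at hy4)

end Subgroup

theorem exists_dihedral_or_quaternion_generators {G : Type*} [Group G] [Finite G] (hna : ¬ ∀ a b : G, a * b = b * a)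
    (hZ : Nat.card (center G) = 2) (hC : ∀ x ∉ center G, Nat.card (centralizer {x}) = 4)
    (hsq : ∀ g : G, g ^ 2 ∈ center G) :
    ∃ x y : G, orderOf y = 4 ∧ x * y * x⁻¹ = y⁻¹ ∧ x ∉ zpowers y ∧ (x ^ 2 = 1 ∨ x ^ 2 = y ^ 2) := by
  obtain ⟨y, hy1⟩ : ∃ y : G, y ^ 2 ≠ 1 := by
    by_contra! h
    exact hna (Commute.of_orderOf_dvd_two fun g => orderOf_dvd_of_pow_eq_one (h g))
  have hord : orderOf y = 4 := orderOf_eq_four_of_sq_mem hZ (hsq y) hy1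
  have hyZ : y ∉ center G := fun h => by
    have := (center G).orderOf_dvd_natCard h
    rw [hord, hZ] at this
    norm_num at this
  have hCy : centralizer {y} = zpowers y := (eq_of_le_of_card_ge
    (zpowers_le.mpr (mem_centralizer_singleton_iff.mpr rfl))
    (by rw [hC y hyZ, Nat.card_zpowers, hord])).symm
  obtain ⟨x, hx⟩ : ∃ x : G, x ∉ zpowers y := by
    by_contra! h
    exact hna fun a b => by
      obtain ⟨k, rfl⟩ := h a
      obtain ⟨l, rfl⟩ := h b
      exact Commute.zpow_zpow_self y k l
  have hxy : ⁅x, y⁆ = y ^ 2 := by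
    refine (eq_one_or_eq_of_card_eq_two hZ (hsq y) hy1
      (commutatorElement_mem_center_of_forall_sq_mem_center hsq x y)).resolve_left fun h => hx ?_
    rw [← hCy, mem_centralizer_singleton_iff]
    exact commutatorElement_eq_one_iff_mul_comm.mp h
  refine ⟨x, y, hord, ?_, hx, eq_one_or_eq_of_card_eq_two hZ (hsq y) hy1 (hsq x)⟩
  calc x * y * x⁻¹ = ⁅x, y⁆ * y := by rw [commutatorElement_def]; group
    _ = y⁻¹ := by
      rw [hxy, eq_inv_iff_mul_eq_one, ← pow_succ, ← pow_succ]
      simpa [hord] using pow_orderOf_eq_one y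

/-- A finite non-abelian group with nontrivial center that is strong `2`-star free
(i.e. `|C_G(x)| < 3 + |Z(G)|` for every noncentral `x`) is isomorphic to `D₈` or `Q₈`. -/
theorem iso_D8_or_Q8_of_strong_two_star_free (G : Type*) [Group G] [Fintype G]
    (hna : ¬ ∀ a b : G, a * b = b * a)
    (hZ : 2 ≤ Nat.card (Subgroup.center G))
    (h : ∀ x : G, x ∉ Subgroup.center G →
      Nat.card (Subgroup.centralizer ({x} : Set G)) <
        3 + Nat.card (Subgroup.center G)) :
    Nonempty (G ≃* DihedralGroup 4) ∨ Nonempty (G ≃* QuaternionGroup 2) := by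
  obtain ⟨u, hu⟩ : ∃ u : G, u ∉ center G := by
    by_contra! hc
    exact hna fun a b => mem_center_iff.mp (hc b) a
  have hZ2 : Nat.card (center G) = 2 := by
    have := two_mul_card_center_le_card_centralizer hu
    have := h u hu
    omega
  have hC4 : ∀ x ∉ center G, Nat.card (centralizer {x}) = 4 := fun x hx => by
    have := two_mul_card_center_le_card_centralizer hx
    have := h x hx
    omega
  have hsq : ∀ g : G, g ^ 2 ∈ center G := fun g => by
    by_cases hg : g ∈ center G
    · exact pow_mem hg 2
    · exact sq_mem_of_card_eq_two_mul (center_le_centralizer {g}) (by rw [hC4 g hg, hZ2])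
        (mem_centralizer_singleton_iff.mpr rfl)
  have hG8 : Nat.card G = 8 := by
    have hle := card_le_card_center_mul_card_centralizer
      (commutatorElement_mem_center_of_forall_sq_mem_center hsq) u
    have hlt := two_mul_card_le_card_of_lt (lt_top_iff_ne_top.mpr fun htop =>
      hu (Set.singleton_subset_iff.mp (centralizer_eq_top_iff_subset.mp htop)))
    rw [card_top, hC4 u hu] at hlt
    rw [hC4 u hu, hZ2] at hle
    omega
  obtain ⟨x, y, hy, hxy, hx, hx2 | hx2⟩ := exists_dihedral_or_quaternion_generators hna hZ2 hC4 hsq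
  · exact .inl (DihedralGroup.nonempty_mulEquiv hG8 hy hx2 hxy hx)
  · exact .inr (QuaternionGroup.nonempty_mulEquiv hG8 hy hx2 hxy hx)
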